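/- arXiv:2506.16675 — 3 statements merged into one kernel-verified Lean document; each statement's English description precedes it below -/
import Mathlib

section
/- Fix d ≥ 2 and an integer k ≥ 1, and let r be an arc-length parameterization of a closed curve of length 1 in ℝ^d. Then there exists s ∈ [0,1] such that ∑_{i=0}^{k−1} ‖r(s + (i+1)/k) − r(s + i/k)‖ ≤ (k/π)·sin(π/k). -/
open MeasureTheory Set Real Function

noncomputable section

/-- `r` is an arc-length parameterization of a closed curve of length 1 in `ℝ^d`. -/
def IsUnitClosedCurve (d : ℕ) (r : ℝ → EuclideanSpace ℝ (Fin d)) : Prop :=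
  Continuous r ∧ Periodic r 1 ∧ LipschitzWith 1 r ∧
    eVariationOn r (Icc (0:ℝ) 1) = 1

/-- The length of a shortest closed curve covering `S`. -/
def w {d : ℕ} (S : Set (EuclideanSpace ℝ (Fin d))) : ENNReal :=
  ⨅ (γ : {γ : ℝ → EuclideanSpace ℝ (Fin d) //
      Continuous γ ∧ Periodic γ 1 ∧ S ⊆ γ '' Icc (0:ℝ) 1}),
    eVariationOn γ.1 (Icc (0:ℝ) 1)

/-- A partition of `[0,1)` into `k` measurable sets of measure `1/k` each. -/
def IsEqualPartition (k : ℕ) (A : Fin k → Set ℝ) : Prop :=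
  (∀ i, MeasurableSet (A i)) ∧ Pairwise (onFun Disjoint A) ∧
    (⋃ i, A i) = Ico (0:ℝ) 1 ∧ ∀ i, volume (A i) = ENNReal.ofReal (1 / k)

def betaCurve (d k : ℕ) (r : ℝ → EuclideanSpace ℝ (Fin d)) : ENNReal :=
  ⨅ (A : {A : Fin k → Set ℝ // IsEqualPartition k A}),
    (k : ENNReal)⁻¹ * ∑ i, w (r '' A.1 i)

def betaSup (d k : ℕ) : ENNReal :=
  ⨆ (r : {r : ℝ → EuclideanSpace ℝ (Fin d) // IsUnitClosedCurve d r}),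
    betaCurve d k r.1

/-- A partition of `C` into `k` nonempty sets. -/
def IsPartitionInto {α : Type*} (k : ℕ) (S : Fin k → Set α) (C : Set α) : Prop :=
  (∀ i, (S i).Nonempty) ∧ Pairwise (onFun Disjoint S) ∧ (⋃ i, S i) = C

def gammaCurve {d : ℕ} (k : ℕ) (C : Set (EuclideanSpace ℝ (Fin d))) : ENNReal :=
  ⨅ (S : {S : Fin k → Set (EuclideanSpace ℝ (Fin d)) // IsPartitionInto k S C}),
    ⨆ i, w (S.1 i)

def gammaSup (d k : ℕ) : ENNReal :=
  ⨆ (r : {r : ℝ → EuclideanSpace ℝ (Fin d) // IsUnitClosedCurve d r}),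
    gammaCurve k (r.1 '' Icc (0:ℝ) 1)

def circlePt (t : ℝ) : EuclideanSpace ℝ (Fin 2) :=
  (EuclideanSpace.equiv (Fin 2) ℝ).symm ![Real.cos t, Real.sin t]

/-!
Write the coordinates of `r` as Fourier series with coefficients `cₙ`. The chord
`t ↦ r (t + a) - r t` has coefficients `(e^{2πina} - 1) cₙ`, so by Parseval
`∫₀¹ ‖r (t + a) - r t‖² = ∑ₙ 4 sin² (πna) ‖cₙ‖²`. Dividing by `a²` and letting `a → 0`, the
Lipschitz bound `‖r (t + a) - r t‖ ≤ |a|` yields `∑ₙ 4π²n² ‖cₙ‖² ≤ 1`, and together with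
`|sin (nx)| ≤ |n| |sin x|` this bounds the mean squared chord by `sin² (πa) / π²`; by
Cauchy–Schwarz the mean chord is at most `sin (πa) / π`. By periodicity the mean over `s` of the
sum of the `k` chords of step `1/k` starting at `s` is `k` times the mean chord of step `1/k`, and
some `s` does at least as well as the mean.
-/

namespace Real

lemma sq_mul_sinc_sq (x : ℝ) : x ^ 2 * sinc x ^ 2 = sin x ^ 2 := by
  rcases eq_or_ne x 0 with rfl | hx
  · simp
  · rw [sinc_of_ne_zero hx]
    field_simp

lemma abs_sin_nat_mul_le (n : ℕ) (x : ℝ) : |sin (n * x)| ≤ n * |sin x| := by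
  induction n with
  | zero => simp
  | succ m ih =>
    calc |sin ((m + 1 : ℕ) * x)| = |sin (m * x) * cos x + cos (m * x) * sin x| := by
          rw [← sin_add]; push_cast; ring_nf
      _ ≤ |sin (m * x)| * |cos x| + |cos (m * x)| * |sin x| := by
          rw [← abs_mul, ← abs_mul]; exact abs_add_le _ _
      _ ≤ m * |sin x| * 1 + 1 * |sin x| := by
          gcongr
          · exact abs_cos_le_one x
          · exact abs_cos_le_one _
      _ = (m + 1 : ℕ) * |sin x| := by push_cast; ring

lemma sin_int_mul_sq_le (n : ℤ) (x : ℝ) : sin (n * x) ^ 2 ≤ n ^ 2 * sin x ^ 2 := by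
  have key : |sin (n * x)| ≤ |(n : ℝ)| * |sin x| := by
    rcases Int.natAbs_eq n with h | h <;> rw [h] <;>
      simpa [neg_mul, sin_neg] using abs_sin_nat_mul_le n.natAbs x
  rw [← sq_abs, ← sq_abs (n : ℝ), ← sq_abs (sin x), ← mul_pow]
  exact pow_le_pow_left₀ (abs_nonneg _) key 2

end Real

lemma sum_sq_mul_le_of_sum_sin_sq_mul_le {M : ℤ → ℝ} {c : ℝ}
    (h : ∀ (b : ℝ) (s : Finset ℤ), ∑ n ∈ s, sin (π * n * b) ^ 2 * M n ≤ c * b ^ 2)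
    (s : Finset ℤ) : ∑ n ∈ s, (π * n) ^ 2 * M n ≤ c := by
  -- `F` is the continuous extension to `b = 0` of `b ↦ b⁻² ∑ n ∈ s, sin (π n b)² M n`.
  set F : ℝ → ℝ := fun b => ∑ n ∈ s, (π * n) ^ 2 * sinc (π * n * b) ^ 2 * M n
  have hF : Continuous F := by fun_prop
  have hF0 : F 0 = ∑ n ∈ s, (π * n) ^ 2 * M n := by simp [F]
  have hFb : ∀ b ≠ (0 : ℝ), F b ≤ c := fun b hb => by
    have hb2 : 0 < b ^ 2 := by positivity
    have : F b * b ^ 2 = ∑ n ∈ s, sin (π * n * b) ^ 2 * M n := by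
      simp only [F, Finset.sum_mul]
      refine Finset.sum_congr rfl fun n _ => ?_
      rw [← sq_mul_sinc_sq]
      ring
    nlinarith [h b s]
  rw [← hF0]
  exact le_of_tendsto ((hF.tendsto 0).mono_left nhdsWithin_le_nhds)
    (eventually_nhdsWithin_of_forall (s := {0}ᶜ) hFb)

lemma tsum_sin_sq_mul_le {M : ℤ → ℝ} {c : ℝ} (hM : 0 ≤ M)
    (h : ∀ (b : ℝ) (s : Finset ℤ), ∑ n ∈ s, sin (π * n * b) ^ 2 * M n ≤ c * b ^ 2) (a : ℝ) :
    ∑' n : ℤ, sin (π * n * a) ^ 2 * M n ≤ c * (sin (π * a) / π) ^ 2 := by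
  have hc : 0 ≤ c := by simpa using h 1 ∅
  refine tsum_le_of_sum_le' (by positivity) fun s => ?_
  calc ∑ n ∈ s, sin (π * n * a) ^ 2 * M n
      ≤ ∑ n ∈ s, (sin (π * a) / π) ^ 2 * ((π * n) ^ 2 * M n) := by
        refine Finset.sum_le_sum fun n _ => ?_
        rw [show π * n * a = n * (π * a) by ring]
        calc sin (n * (π * a)) ^ 2 * M n ≤ n ^ 2 * sin (π * a) ^ 2 * M n :=
              mul_le_mul_of_nonneg_right (sin_int_mul_sq_le n (π * a)) (hM n)
          _ = _ := by field_simp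
    _ = (sin (π * a) / π) ^ 2 * ∑ n ∈ s, (π * n) ^ 2 * M n := by rw [Finset.mul_sum]
    _ ≤ (sin (π * a) / π) ^ 2 * c := by gcongr; exact sum_sq_mul_le_of_sum_sin_sq_mul_le h s
    _ = c * (sin (π * a) / π) ^ 2 := mul_comm _ _

section Fourier

variable {E : Type*} [NormedAddCommGroup E] [NormedSpace ℂ E]

lemma fourierCoeffOn_sub {a b : ℝ} (hab : a < b) {f g : ℝ → E}
    (hf : IntervalIntegrable f volume a b) (hg : IntervalIntegrable g volume a b) (n : ℤ) :
    fourierCoeffOn hab (f - g) n = fourierCoeffOn hab f n - fourierCoeffOn hab g n := by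
  have hfourier : ContinuousOn (fun x : ℝ => fourier (-n) (x : AddCircle (b - a))) (uIcc a b) :=
    ((fourier (-n)).continuous.comp (AddCircle.continuous_mk' _)).continuousOn
  simp_rw [fourierCoeffOn_eq_integral, Pi.sub_apply, smul_sub]
  rw [intervalIntegral.integral_sub (hf.continuousOn_smul hfourier)
    (hg.continuousOn_smul hfourier), smul_sub]

lemma fourierCoeffOn_comp_add {a b : ℝ} (hab : a < b) {f : ℝ → E} (hf : Periodic f (b - a))
    (c : ℝ) (n : ℤ) :
    fourierCoeffOn hab (fun t => f (t + c)) n =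
      fourier n (c : AddCircle (b - a)) • fourierCoeffOn hab f n := by
  have : Fact (0 < b - a) := ⟨sub_pos.2 hab⟩
  set h : ℝ → E := fun x => fourier (-n) (x : AddCircle (b - a)) • f x
  have hper : Periodic h (b - a) := fun x => by simp only [h, hf x, AddCircle.coe_add_period]
  have hshift : ∀ x : ℝ, fourier (-n) (x : AddCircle (b - a)) • f (x + c) =
      fourier n (c : AddCircle (b - a)) • h (x + c) := fun x => by
    simp only [h, smul_smul]
    congr 1
    rw [fourier_coe_apply, fourier_coe_apply, fourier_coe_apply, ← Complex.exp_add]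
    congr 1
    push_cast
    ring
  rw [fourierCoeffOn_eq_integral, fourierCoeffOn_eq_integral, smul_comm]
  simp_rw [hshift]
  rw [intervalIntegral.integral_smul, intervalIntegral.integral_comp_add_right,
    show b + c = a + c + (b - a) by ring, hper.intervalIntegral_add_eq (a + c) a,
    add_sub_cancel]

end Fourier

lemma norm_fourier_coe_sub_one (T : ℝ) (n : ℤ) (b : ℝ) :
    ‖fourier n (b : AddCircle T) - 1‖ = |2 * sin (π * n * b / T)| := by
  rw [fourier_coe_apply, ← Real.norm_eq_abs,
    show 2 * π * Complex.I * n * b / T = Complex.I * (2 * π * n * b / T : ℝ) by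
      push_cast; ring,
    Complex.norm_exp_I_mul_ofReal_sub_one]
  ring_nf

lemma hasSum_sin_sq_mul_sq_fourierCoeffOn {f : ℝ → ℂ} (hf : Continuous f) (hper : Periodic f 1)
    (b : ℝ) :
    HasSum (fun n : ℤ => sin (π * n * b) ^ 2 * (4 * ‖fourierCoeffOn zero_lt_one f n‖ ^ 2))
      (∫ t in (0 : ℝ)..1, ‖f (t + b) - f t‖ ^ 2) := by
  have hg : Continuous fun t => f (t + b) - f t := by fun_prop
  have hmem : MemLp (fun t => f (t + b) - f t) 2 (volume.restrict (Ioc 0 1)) :=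
    (memLp_two_iff_integrable_sq_norm hg.aestronglyMeasurable).2
      (by fun_prop : Continuous fun t => ‖f (t + b) - f t‖ ^ 2).integrableOn_Ioc
  convert hasSum_sq_fourierCoeffOn zero_lt_one hmem using 1
  · ext n
    rw [show (fun t => f (t + b) - f t) = (fun t => f (t + b)) - f from rfl,
      fourierCoeffOn_sub _ ((show Continuous fun t => f (t + b) by fun_prop).intervalIntegrable _ _)
        (hf.intervalIntegrable _ _),
      fourierCoeffOn_comp_add _ (by simpa using hper), smul_eq_mul, ← sub_one_mul, norm_mul,
      norm_fourier_coe_sub_one, sub_zero, div_one, mul_pow, sq_abs]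
    ring
  · simp

lemma sq_intervalIntegral_le_intervalIntegral_sq {f : ℝ → ℝ} (hf : Continuous f) :
    (∫ t in (0 : ℝ)..1, f t) ^ 2 ≤ ∫ t in (0 : ℝ)..1, f t ^ 2 := by
  set m := ∫ t in (0 : ℝ)..1, f t
  have hvar : ∫ t in (0 : ℝ)..1, (f t - m) ^ 2 = (∫ t in (0 : ℝ)..1, f t ^ 2) - m ^ 2 := by
    simp_rw [sub_sq]
    rw [intervalIntegral.integral_add, intervalIntegral.integral_sub,
      intervalIntegral.integral_mul_const, intervalIntegral.integral_const_mul]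
    · simp only [intervalIntegral.integral_const, sub_zero, smul_eq_mul, one_mul, m]
      ring
    all_goals apply Continuous.intervalIntegrable; fun_prop
  have : 0 ≤ ∫ t in (0 : ℝ)..1, (f t - m) ^ 2 :=
    intervalIntegral.integral_nonneg zero_le_one fun t _ => sq_nonneg (f t - m)
  linarith

lemma exists_mem_Icc_le_intervalIntegral {f : ℝ → ℝ} (hf : IntervalIntegrable f volume 0 1) :
    ∃ s ∈ Icc (0 : ℝ) 1, f s ≤ ∫ t in (0 : ℝ)..1, f t := by
  obtain ⟨s, hs, hle⟩ := exists_le_setAverage (s := Ioc (0 : ℝ) 1) (by simp) (by simp)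
    ((intervalIntegrable_iff_integrableOn_Ioc_of_le zero_le_one).1 hf)
  refine ⟨s, Ioc_subset_Icc_self hs, ?_⟩
  simpa [setAverage_eq, intervalIntegral.integral_of_le zero_le_one] using hle

lemma Function.Periodic.integral_sum_comp_add_div {g : ℝ → ℝ} (hg : Periodic g 1)
    (hc : Continuous g) (k : ℕ) :
    ∫ s in (0 : ℝ)..1, ∑ i ∈ Finset.range k, g (s + i / k) = k * ∫ s in (0 : ℝ)..1, g s := by
  have hshift : ∀ c : ℝ, ∫ s in (0 : ℝ)..1, g (s + c) = ∫ s in (0 : ℝ)..1, g s := fun c => by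
    rw [intervalIntegral.integral_comp_add_right, zero_add, add_comm,
      hg.intervalIntegral_add_eq c 0, zero_add]
  rw [intervalIntegral.integral_finsetSum (f := fun (i : ℕ) s => g (s + i / k))
    fun i _ => (hc.comp (continuous_add_const _)).intervalIntegrable _ _]
  simp [hshift]

section Chord

variable {ι : Type*} [Fintype ι] {r : ℝ → EuclideanSpace ℝ ι} {L : NNReal}

lemma LipschitzWith.integral_sq_chord_le (hr : LipschitzWith L r) (hper : Periodic r 1) (a : ℝ) :
    ∫ t in (0 : ℝ)..1, ‖r (t + a) - r t‖ ^ 2 ≤ (L * sin (π * a) / π) ^ 2 := by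
  set u : ι → ℝ → ℂ := fun j t => (r t j : ℂ)
  have hu : ∀ j, Continuous (u j) := fun j => by
    have := hr.continuous; fun_prop
  set M : ℤ → ℝ := fun n => 4 * ∑ j, ‖fourierCoeffOn zero_lt_one (u j) n‖ ^ 2
  have hsum : ∀ b, HasSum (fun n : ℤ => sin (π * n * b) ^ 2 * M n)
      (∫ t in (0 : ℝ)..1, ‖r (t + b) - r t‖ ^ 2) := fun b => by
    have := hasSum_sum fun j (_ : j ∈ Finset.univ) =>
      hasSum_sin_sq_mul_sq_fourierCoeffOn (hu j) (fun t => by simp [u, hper t]) b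
    simp only [← Finset.mul_sum] at this
    convert this using 1
    rw [← intervalIntegral.integral_finsetSum fun j _ => by
      apply Continuous.intervalIntegrable; have := hu j; fun_prop]
    congr 1 with t
    simp [u, EuclideanSpace.norm_sq_eq, ← Complex.ofReal_sub]
  have hbound : ∀ b : ℝ, ∫ t in (0 : ℝ)..1, ‖r (t + b) - r t‖ ^ 2 ≤ L ^ 2 * b ^ 2 := fun b => by
    calc ∫ t in (0 : ℝ)..1, ‖r (t + b) - r t‖ ^ 2 ≤ ∫ t in (0 : ℝ)..1, (L * |b|) ^ 2 := by
          refine intervalIntegral.integral_mono_on zero_le_one ?_ intervalIntegrable_const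
            fun t _ => ?_
          · apply Continuous.intervalIntegrable; have := hr.continuous; fun_prop
          · gcongr
            simpa [dist_eq_norm] using hr.dist_le_mul (t + b) t
      _ = L ^ 2 * b ^ 2 := by simp [mul_pow]
  have hM : 0 ≤ M := fun n => by positivity
  rw [← (hsum a).tsum_eq, div_pow, mul_pow, mul_div_assoc, ← div_pow]
  exact tsum_sin_sq_mul_le hM (fun b s => (sum_le_hasSum s (fun n _ => by positivity)
    (hsum b)).trans (hbound b)) a

lemma LipschitzWith.integral_chord_le (hr : LipschitzWith L r) (hper : Periodic r 1) (a : ℝ) :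
    ∫ t in (0 : ℝ)..1, ‖r (t + a) - r t‖ ≤ L * |sin (π * a)| / π := by
  refine le_of_sq_le_sq ?_ (by positivity)
  calc (∫ t in (0 : ℝ)..1, ‖r (t + a) - r t‖) ^ 2 ≤ ∫ t in (0 : ℝ)..1, ‖r (t + a) - r t‖ ^ 2 :=
        sq_intervalIntegral_le_intervalIntegral_sq (by have := hr.continuous; fun_prop)
    _ ≤ (L * sin (π * a) / π) ^ 2 := hr.integral_sq_chord_le hper a
    _ = (L * |sin (π * a)| / π) ^ 2 := by rw [div_pow, div_pow, mul_pow, mul_pow, sq_abs]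

end Chord

theorem exists_good_chord_sum_general (d k : ℕ)
    (r : ℝ → EuclideanSpace ℝ (Fin d)) (hr : IsUnitClosedCurve d r) :
    ∃ s ∈ Icc (0:ℝ) 1,
      ∑ i ∈ Finset.range k, ‖r (s + ((i : ℝ) + 1) / k) - r (s + (i : ℝ) / k)‖ ≤
        (k / π) * Real.sin (π / k) := by
  obtain ⟨-, hper, hlip, -⟩ := hr
  set g : ℝ → ℝ := fun t => ‖r (t + 1 / k) - r t‖
  have hg : Continuous g := by have := hlip.continuous; fun_prop
  have hgper : Periodic g 1 := fun t => by simp only [g, add_right_comm t 1, hper _]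
  have hsin : 0 ≤ sin (π / k) := by
    rcases k.eq_zero_or_pos with rfl | hk
    · simp
    · exact sin_nonneg_of_nonneg_of_le_pi (by positivity)
        (div_le_self pi_pos.le (by exact_mod_cast hk))
  obtain ⟨s, hs, hmin⟩ := exists_mem_Icc_le_intervalIntegral
    (f := fun s => ∑ i ∈ Finset.range k, g (s + i / k))
    (Continuous.intervalIntegrable (by fun_prop) _ _)
  refine ⟨s, hs, ?_⟩
  calc ∑ i ∈ Finset.range k, ‖r (s + ((i : ℝ) + 1) / k) - r (s + (i : ℝ) / k)‖
      = ∑ i ∈ Finset.range k, g (s + i / k) := by simp only [g, add_div, add_assoc]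
    _ ≤ k * ∫ t in (0 : ℝ)..1, g t := hmin.trans (hgper.integral_sum_comp_add_div hg k).le
    _ ≤ k * (1 * |sin (π * (1 / k))| / π) := by
      gcongr
      exact_mod_cast hlip.integral_chord_le hper _
    _ = k / π * sin (π / k) := by rw [mul_one_div, abs_of_nonneg hsin]; ring

theorem exists_good_chord_sum (d k : ℕ) (hd : 2 ≤ d) (hk : 1 ≤ k)
    (r : ℝ → EuclideanSpace ℝ (Fin d)) (hr : IsUnitClosedCurve d r) :
    ∃ s ∈ Icc (0:ℝ) 1,
      ∑ i ∈ Finset.range k, ‖r (s + ((i : ℝ) + 1) / k) - r (s + (i : ℝ) / k)‖ ≤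
        (k / π) * Real.sin (π / k) :=
  exists_good_chord_sum_general d k r hr
end
end

section
/- Let k ≥ 1 be an integer and let α_1,…,α_m be real numbers with 0 ≤ α_i ≤ 2π/k for each i and ∑_{i=1}^m α_i ≥ 2π/k. Then ∑_{i=1}^m 2·sin(α_i/2) ≥ 2·sin(π/k). -/
open MeasureTheory Set Real Function

noncomputable section

/-!
By concavity of `sin` on `[0, π]`, the graph lies above the chord from `0` to `c`, i.e.
`x * sin c ≤ c * sin x` for `0 ≤ x ≤ c ≤ π`. Summing this over the `α i / 2 ≤ π / k`, whose total
is at least `π / k`, gives `(π / k) * sin (π / k) ≤ (π / k) * ∑ sin (α i / 2)`.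
-/

theorem ConcaveOn.smul_le_map_smul {E : Type*} [AddCommGroup E] [Module ℝ E] {s : Set E}
    {f : E → ℝ} (hf : ConcaveOn ℝ s f) (h0 : (0 : E) ∈ s) (hf0 : 0 ≤ f 0) {x : E} (hx : x ∈ s)
    {t : ℝ} (ht0 : 0 ≤ t) (ht1 : t ≤ 1) : t * f x ≤ f (t • x) := by
  have := hf.2 h0 hx (sub_nonneg.2 ht1) ht0 (sub_add_cancel 1 t)
  rw [smul_zero, zero_add, smul_eq_mul, smul_eq_mul] at this
  nlinarith

namespace Real

theorem mul_sin_le_mul_sin {x c : ℝ} (hx : 0 ≤ x) (hxc : x ≤ c) (hc : c ≤ π) :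
    x * sin c ≤ c * sin x := by
  rcases (hx.trans hxc).eq_or_lt with rfl | hc0
  · simp
  have hchord := strictConcaveOn_sin_Icc.concaveOn.smul_le_map_smul
    ⟨le_rfl, pi_pos.le⟩ sin_zero.ge ⟨hc0.le, hc⟩ (div_nonneg hx hc0.le) ((div_le_one hc0).2 hxc)
  rw [smul_eq_mul, div_mul_cancel₀ x hc0.ne'] at hchord
  calc x * sin c = c * (x / c * sin c) := by field_simp
    _ ≤ c * sin x := by gcongr

theorem sin_le_sum_sin {ι : Type*} (s : Finset ι) (x : ι → ℝ) {c : ℝ} (hc0 : 0 ≤ c) (hc : c ≤ π)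
    (hx0 : ∀ i ∈ s, 0 ≤ x i) (hxc : ∀ i ∈ s, x i ≤ c) (hsum : c ≤ ∑ i ∈ s, x i) :
    sin c ≤ ∑ i ∈ s, sin (x i) := by
  have hsin_nonneg : ∀ i ∈ s, 0 ≤ sin (x i) := fun i hi =>
    sin_nonneg_of_nonneg_of_le_pi (hx0 i hi) ((hxc i hi).trans hc)
  rcases hc0.eq_or_lt with rfl | hc0
  · simpa using Finset.sum_nonneg hsin_nonneg
  refine le_of_mul_le_mul_left ?_ hc0
  calc c * sin c ≤ (∑ i ∈ s, x i) * sin c :=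
        mul_le_mul_of_nonneg_right hsum (sin_nonneg_of_nonneg_of_le_pi hc0.le hc)
    _ = ∑ i ∈ s, x i * sin c := Finset.sum_mul ..
    _ ≤ ∑ i ∈ s, c * sin (x i) :=
        Finset.sum_le_sum fun i hi => mul_sin_le_mul_sin (hx0 i hi) (hxc i hi) hc
    _ = c * ∑ i ∈ s, sin (x i) := (Finset.mul_sum ..).symm

end Real

theorem sum_sin_half_ge_general (k m : ℕ) (α : Fin m → ℝ)
    (h0 : ∀ i, 0 ≤ α i) (h1 : ∀ i, α i ≤ 2 * π / k)
    (hsum : 2 * π / k ≤ ∑ i, α i) :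
    2 * Real.sin (π / k) ≤ ∑ i, 2 * Real.sin (α i / 2) := by
  rw [← Finset.mul_sum]
  refine mul_le_mul_of_nonneg_left ?_ two_pos.le
  rw [mul_div_assoc] at h1 hsum
  refine Real.sin_le_sum_sin _ (fun i => α i / 2) (by positivity)
    (div_nat_le_self_of_nonnneg pi_pos.le k) (fun i _ => by linarith [h0 i])
    (fun i _ => by linarith [h1 i]) ?_
  rw [← Finset.sum_div]
  linarith

theorem sum_sin_half_ge (k m : ℕ) (hk : 1 ≤ k) (α : Fin m → ℝ)
    (h0 : ∀ i, 0 ≤ α i) (h1 : ∀ i, α i ≤ 2 * π / k)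
    (hsum : 2 * π / k ≤ ∑ i, α i) :
    2 * Real.sin (π / k) ≤ ∑ i, 2 * Real.sin (α i / 2) :=
  sum_sin_half_ge_general k m α h0 h1 hsum

end
end

section
/- For every integer d ≥ 2, k·γ_d(k) → 2 as k → ∞; that is, the sequence k ↦ k·γ_d(k) tends to 2. -/
open MeasureTheory Set Real Function

noncomputable section

namespace GammaAsym

/-- radius of circle of circumference 1 -/
def R : ℝ := (2 * π)⁻¹

lemma R_pos : 0 < R := by
  have := Real.pi_pos
  rw [R]; positivity

/-- the circle curve in ℝ^d -/
def cr (d : ℕ) (t : ℝ) : EuclideanSpace ℝ (Fin d) :=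
  WithLp.toLp 2 (fun j => if (j : ℕ) = 0 then R * Real.cos (2 * π * t)
    else if (j : ℕ) = 1 then R * Real.sin (2 * π * t) else 0)

lemma cr_dist {d : ℕ} (hd : 2 ≤ d) (s t : ℝ) :
    dist (cr d s) (cr d t) = 2 * R * |Real.sin (π * (s - t))| := by
  have h0 : (0 : ℕ) < d := by omega
  have h1 : (1 : ℕ) < d := by omega
  let j0 : Fin d := ⟨0, h0⟩
  let j1 : Fin d := ⟨1, h1⟩
  rw [EuclideanSpace.dist_eq]
  have hsum : ∑ j : Fin d, dist (cr d s j) (cr d t j) ^ 2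
      = dist (cr d s j0) (cr d t j0) ^ 2 + dist (cr d s j1) (cr d t j1) ^ 2 := by
    rw [← Finset.sum_subset (Finset.subset_univ {j0, j1})]
    · rw [Finset.sum_pair (by simp [j0, j1, Fin.ext_iff])]
    · intro j _ hj
      simp only [Finset.mem_insert, Finset.mem_singleton] at hj
      push_neg at hj
      have hj0 : (j : ℕ) ≠ 0 := fun h => hj.1 (by simp [j0, Fin.ext_iff, h])
      have hj1 : (j : ℕ) ≠ 1 := fun h => hj.2 (by simp [j1, Fin.ext_iff, h])
      simp [cr, hj0, hj1]
  rw [hsum]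
  have e0 : dist (cr d s j0) (cr d t j0) ^ 2
      = (R * Real.cos (2*π*s) - R * Real.cos (2*π*t))^2 := by
    rw [Real.dist_eq, sq_abs]; simp [cr, j0]
  have e1 : dist (cr d s j1) (cr d t j1) ^ 2
      = (R * Real.sin (2*π*s) - R * Real.sin (2*π*t))^2 := by
    rw [Real.dist_eq, sq_abs]; simp [cr, j1]
  rw [e0, e1]
  have key : (R * Real.cos (2*π*s) - R * Real.cos (2*π*t))^2
      + (R * Real.sin (2*π*s) - R * Real.sin (2*π*t))^2
      = (2 * R)^2 * ((1 - Real.cos (2*π*s - 2*π*t)) / 2) := by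
    rw [Real.cos_sub]
    have hc := Real.sin_sq_add_cos_sq (2*π*s)
    have hc' := Real.sin_sq_add_cos_sq (2*π*t)
    linear_combination (R^2) * hc + (R^2) * hc'
  rw [key]
  have habs : |Real.sin (π * (s - t))| = Real.sqrt ((1 - Real.cos (2*π*s - 2*π*t)) / 2) := by
    have : π * (s - t) = (2*π*s - 2*π*t) / 2 := by ring
    rw [this, Real.abs_sin_half]
  rw [habs, Real.sqrt_mul (by positivity), Real.sqrt_sq (by nlinarith [R_pos])]

end GammaAsym


namespace GammaAsym

lemma cr_lipschitz {d : ℕ} (hd : 2 ≤ d) : LipschitzWith 1 (cr d) := by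
  apply LipschitzWith.of_dist_le_mul
  intro s t
  rw [cr_dist hd, Real.dist_eq, NNReal.coe_one, one_mul]
  have h1 : |Real.sin (π * (s - t))| ≤ |π * (s - t)| := Real.abs_sin_le_abs
  have h2 : |π * (s - t)| = π * |s - t| := by
    rw [abs_mul, abs_of_pos Real.pi_pos]
  have hR : 2 * R * π = 1 := by
    rw [R]; field_simp
  calc 2 * R * |Real.sin (π * (s - t))| ≤ 2 * R * (π * |s - t|) := by
        rw [← h2]; exact mul_le_mul_of_nonneg_left h1 (by nlinarith [R_pos])
    _ = |s - t| := by rw [← mul_assoc, hR, one_mul]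

lemma cr_periodic (d : ℕ) : Periodic (cr d) 1 := by
  intro t
  unfold cr
  have hc : 2 * π * (t + 1) = 2 * π * t + 2 * π := by ring
  rw [hc, Real.cos_add_two_pi, Real.sin_add_two_pi]

lemma cr_continuous {d : ℕ} (hd : 2 ≤ d) : Continuous (cr d) :=
  (cr_lipschitz hd).continuous

lemma cr_edist {d : ℕ} (hd : 2 ≤ d) (s t : ℝ) :
    edist (cr d s) (cr d t) = ENNReal.ofReal (2 * R * |Real.sin (π * (s - t))|) := by
  rw [edist_dist, cr_dist hd]

end GammaAsym



namespace GammaAsym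

lemma evar_le_of_lipschitz {E : Type*} [PseudoEMetricSpace E] {f : ℝ → E}
    (hf : LipschitzWith 1 f) {a b : ℝ} (hab : a ≤ b) :
    eVariationOn f (Icc a b) ≤ ENNReal.ofReal (b - a) := by
  have h1 : eVariationOn (f ∘ id) (Icc a b) ≤ 1 * eVariationOn id (Icc a b) :=
    LipschitzOnWith.comp_eVariationOn_le (hf.lipschitzOnWith) (mapsTo_id _)
  have h2 : eVariationOn (id : ℝ → ℝ) (Icc a b) ≤ ENNReal.ofReal (b - a) := by
    have h3 := MonotoneOn.eVariationOn_le (monotoneOn_id (s := Icc a b))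
      (left_mem_Icc.2 hab) (right_mem_Icc.2 hab)
    simpa using h3
  calc eVariationOn f (Icc a b) = eVariationOn (f ∘ id) (Icc a b) := rfl
    _ ≤ 1 * eVariationOn id (Icc a b) := h1
    _ = eVariationOn id (Icc a b) := one_mul _
    _ ≤ ENNReal.ofReal (b - a) := h2

lemma cr_evar_ge {d : ℕ} (hd : 2 ≤ d) (n : ℕ) (hn : 1 ≤ n) :
    ENNReal.ofReal ((n : ℝ) * (2 * R * Real.sin (π / n))) ≤ eVariationOn (cr d) (Icc 0 1) := by
  have hn' : (0:ℝ) < n := by exact_mod_cast hn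
  set u : ℕ → ℝ := fun i => min ((i : ℝ) / n) 1 with hu
  have hmono : Monotone u := by
    intro i j hij
    apply min_le_min _ le_rfl
    gcongr
  have hmem : ∀ i, u i ∈ Icc (0:ℝ) 1 :=
    fun i => ⟨le_min (by positivity) zero_le_one, min_le_right _ _⟩
  have hsum := eVariationOn.sum_le (f := cr d) (n := n) hmono hmem
  refine le_trans ?_ hsum
  have hterm : ∀ i ∈ Finset.range n,
      edist (cr d (u (i+1))) (cr d (u i)) = ENNReal.ofReal (2 * R * Real.sin (π / n)) := by
    intro i hi
    have hi' : i < n := Finset.mem_range.mp hi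
    have h1 : u i = (i:ℝ) / n := min_eq_left (by
      rw [div_le_one hn']
      exact_mod_cast hi'.le)
    have h2 : u (i+1) = ((i:ℝ)+1) / n := by
      have : u (i+1) = min (((i+1 : ℕ) : ℝ) / n) 1 := rfl
      rw [this]
      push_cast
      apply min_eq_left
      rw [div_le_one hn']
      exact_mod_cast hi'
    rw [h1, h2, cr_edist hd]
    congr 1
    have harg : π * (((i:ℝ)+1) / n - (i:ℝ) / n) = π / n := by
      field_simp; ring
    rw [harg, abs_of_nonneg]
    apply Real.sin_nonneg_of_nonneg_of_le_pi
    · positivity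
    · rw [div_le_iff₀ hn']
      have h1n : (1:ℝ) ≤ n := by exact_mod_cast hn
      nlinarith [Real.pi_pos]
  rw [Finset.sum_congr rfl hterm, Finset.sum_const, Finset.card_range, nsmul_eq_mul]
  rw [ENNReal.ofReal_mul (by positivity), ENNReal.ofReal_natCast]

lemma nsin_tendsto : Filter.Tendsto (fun n : ℕ => (n:ℝ) * Real.sin (π / n))
    Filter.atTop (nhds π) := by
  have hder : HasDerivAt Real.sin (Real.cos 0) 0 := Real.hasDerivAt_sin 0
  rw [hasDerivAt_iff_tendsto_slope] at hder
  have hseq : Filter.Tendsto (fun n : ℕ => π / (n:ℝ)) Filter.atTop (nhdsWithin 0 {(0:ℝ)}ᶜ) := by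
    rw [tendsto_nhdsWithin_iff]
    constructor
    · exact tendsto_const_div_atTop_nhds_zero_nat π
    · filter_upwards [Filter.eventually_gt_atTop 0] with n hn
      have h : (0:ℝ) < π / n := div_pos Real.pi_pos (by exact_mod_cast hn)
      exact fun hmem => absurd (hmem : π / (n:ℝ) = 0) (ne_of_gt h)
  have hcomp := hder.comp hseq
  have hcomp' : Filter.Tendsto (fun n : ℕ => Real.sin (π / n) / (π / n))
      Filter.atTop (nhds 1) := by
    rw [Real.cos_zero] at hcomp
    refine hcomp.congr (fun n => ?_)
    simp [slope_def_field, Real.sin_zero]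
  have hmul := hcomp'.const_mul π
  rw [mul_one] at hmul
  refine hmul.congr' ?_
  filter_upwards [Filter.eventually_gt_atTop 0] with n hn
  have hn' : (0:ℝ) < n := by exact_mod_cast hn
  have hπ : π / (n:ℝ) ≠ 0 := ne_of_gt (div_pos Real.pi_pos hn')
  field_simp

lemma cr_evar {d : ℕ} (hd : 2 ≤ d) : eVariationOn (cr d) (Icc 0 1) = 1 := by
  apply le_antisymm
  · have h := evar_le_of_lipschitz (cr_lipschitz hd) (zero_le_one (α := ℝ))
    simpa using h
  · have hreal : Filter.Tendsto (fun n : ℕ => (n:ℝ) * (2 * R * Real.sin (π / n)))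
        Filter.atTop (nhds 1) := by
      have h2 := nsin_tendsto.const_mul (2 * R)
      have hR : 2 * R * π = 1 := by rw [R]; field_simp
      rw [hR] at h2
      refine h2.congr (fun n => by ring)
    have hlim : Filter.Tendsto (fun n : ℕ => ENNReal.ofReal ((n:ℝ) * (2 * R * Real.sin (π / n))))
        Filter.atTop (nhds 1) := by
      have := (ENNReal.continuous_ofReal.tendsto 1).comp hreal
      rw [ENNReal.ofReal_one] at this
      exact this
    refine le_of_tendsto' hlim (fun n => ?_)
    rcases Nat.eq_zero_or_pos n with h0 | h1
    · simp [h0]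
    · exact cr_evar_ge hd n h1

lemma cr_isUnitClosedCurve {d : ℕ} (hd : 2 ≤ d) : IsUnitClosedCurve d (cr d) :=
  ⟨cr_continuous hd, cr_periodic d, cr_lipschitz hd, cr_evar hd⟩

end GammaAsym


namespace GammaAsym

variable {d : ℕ}

lemma w_le_of_curve {S : Set (EuclideanSpace ℝ (Fin d))} {γ : ℝ → EuclideanSpace ℝ (Fin d)}
    (hc : Continuous γ) (hp : Periodic γ 1) (hcov : S ⊆ γ '' Icc (0:ℝ) 1) :
    w S ≤ eVariationOn γ (Icc (0:ℝ) 1) :=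
  iInf_le (fun γ' : {γ' : ℝ → EuclideanSpace ℝ (Fin d) //
      Continuous γ' ∧ Periodic γ' 1 ∧ S ⊆ γ' '' Icc (0:ℝ) 1} => eVariationOn γ'.1 (Icc (0:ℝ) 1))
    ⟨γ, hc, hp, hcov⟩

lemma w_mono {S T : Set (EuclideanSpace ℝ (Fin d))} (hST : S ⊆ T) : w S ≤ w T := by
  apply le_iInf
  rintro ⟨γ, hc, hp, hcov⟩
  exact w_le_of_curve hc hp (hST.trans hcov)

lemma w_singleton (x : EuclideanSpace ℝ (Fin d)) : w {x} = 0 := by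
  apply le_antisymm _ zero_le
  have h := w_le_of_curve (S := {x}) (γ := fun _ => x) continuous_const
    (fun _ => rfl) (by
      intro y hy
      rcases hy with rfl
      exact ⟨0, by simp⟩)
  refine le_trans h (le_of_eq ?_)
  apply eVariationOn.constant_on
  intro a ha b hb
  rcases ha with ⟨_, _, rfl⟩
  rcases hb with ⟨_, _, rfl⟩
  rfl

lemma two_edist_le_evar {γ : ℝ → EuclideanSpace ℝ (Fin d)} (hp : Periodic γ 1)
    {u v : ℝ} (hu : u ∈ Icc (0:ℝ) 1) (hv : v ∈ Icc (0:ℝ) 1) (huv : u ≤ v) :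
    2 * edist (γ u) (γ v) ≤ eVariationOn γ (Icc (0:ℝ) 1) := by
  set p : ℕ → ℝ := fun n => match n with
    | 0 => 0
    | 1 => u
    | 2 => v
    | _ + 3 => 1 with hp'
  have hmono : Monotone p := by
    apply monotone_nat_of_le_succ
    intro n
    match n with
    | 0 => exact hu.1
    | 1 => exact huv
    | 2 => exact hv.2
    | m + 3 => exact le_rfl
  have hmem : ∀ i, p i ∈ Icc (0:ℝ) 1 := by
    intro i
    match i with
    | 0 => exact ⟨le_rfl, zero_le_one⟩
    | 1 => exact hu
    | 2 => exact hv
    | m + 3 => exact ⟨zero_le_one, le_rfl⟩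
  have hsum := eVariationOn.sum_le (f := γ) (n := 3) hmono hmem
  refine le_trans ?_ hsum
  have h3 : ∑ i ∈ Finset.range 3, edist (γ (p (i+1))) (γ (p i))
      = edist (γ u) (γ 0) + edist (γ v) (γ u) + edist (γ 1) (γ v) := by
    rw [Finset.sum_range_succ, Finset.sum_range_succ, Finset.sum_range_one]
  rw [h3]
  clear hsum h3
  have hγ1 : γ 1 = γ 0 := by
    have := hp 0
    simpa using this
  rw [hγ1, edist_comm (γ 0) (γ v), edist_comm (γ v) (γ u)]
  have htri : edist (γ u) (γ v) ≤ edist (γ u) (γ 0) + edist (γ 0) (γ v) := edist_triangle _ _ _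
  calc 2 * edist (γ u) (γ v) = edist (γ u) (γ v) + edist (γ u) (γ v) := by ring
    _ ≤ (edist (γ u) (γ 0) + edist (γ 0) (γ v)) + edist (γ u) (γ v) :=
        add_le_add_left htri _
    _ = edist (γ u) (γ 0) + edist (γ u) (γ v) + edist (γ v) (γ 0) := by
        rw [edist_comm (γ 0) (γ v)]; ring

lemma two_edist_le_w {S : Set (EuclideanSpace ℝ (Fin d))} {x y : EuclideanSpace ℝ (Fin d)}
    (hx : x ∈ closure S) (hy : y ∈ closure S) :
    2 * edist x y ≤ w S := by
  apply le_iInf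
  rintro ⟨γ, hc, hp, hcov⟩
  have hK : IsCompact (γ '' Icc (0:ℝ) 1) := isCompact_Icc.image hc
  have hcl : closure S ⊆ γ '' Icc (0:ℝ) 1 := hK.isClosed.closure_subset_iff.mpr hcov
  obtain ⟨u, hu, hxu⟩ := hcl hx
  obtain ⟨v, hv, hyv⟩ := hcl hy
  rcases le_total u v with huv | hvu
  · rw [← hxu, ← hyv]
    exact two_edist_le_evar hp hu hv huv
  · rw [← hxu, ← hyv, edist_comm]
    exact two_edist_le_evar hp hv hu hvu

end GammaAsym


namespace GammaAsym

variable {d : ℕ}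

/-- the tent reparameterization function -/
def tent (a b t : ℝ) : ℝ := a + (b - a) * ((1 - Real.cos (2 * π * t)) / 2)

lemma tent_cont (a b : ℝ) : Continuous (tent a b) := by
  unfold tent; fun_prop

lemma tent_periodic (a b : ℝ) : Periodic (tent a b) 1 := by
  intro t
  unfold tent
  have hc : 2 * π * (t + 1) = 2 * π * t + 2 * π := by ring
  rw [hc, Real.cos_add_two_pi]

lemma tent_mem {a b : ℝ} (hab : a ≤ b) (t : ℝ) : tent a b t ∈ Icc a b := by
  have h1 := Real.cos_le_one (2 * π * t)
  have h2 := Real.neg_one_le_cos (2 * π * t)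
  unfold tent
  constructor <;> nlinarith

lemma tent_zero (a b : ℝ) : tent a b 0 = a := by
  unfold tent; simp

lemma tent_half (a b : ℝ) : tent a b (1/2) = b := by
  unfold tent
  have : 2 * π * (1/2) = π := by ring
  rw [this, Real.cos_pi]
  ring

lemma tent_monoOn {a b : ℝ} (hab : a ≤ b) : MonotoneOn (tent a b) (Icc 0 (1/2 : ℝ)) := by
  intro x hx y hy hxy
  unfold tent
  have hcos : Real.cos (2 * π * y) ≤ Real.cos (2 * π * x) := by
    apply Real.strictAntiOn_cos.antitoneOn _ _ (by nlinarith [Real.pi_pos])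
    · constructor
      · nlinarith [Real.pi_pos, hx.1]
      · nlinarith [Real.pi_pos, hx.2]
    · constructor
      · nlinarith [Real.pi_pos, hy.1]
      · nlinarith [Real.pi_pos, hy.2]
  nlinarith

lemma tent_antiOn {a b : ℝ} (hab : a ≤ b) : AntitoneOn (tent a b) (Icc (1/2 : ℝ) 1) := by
  intro x hx y hy hxy
  unfold tent
  have e1 : Real.cos (2 * π * x) = Real.cos (2 * π - 2 * π * x) := (Real.cos_two_pi_sub _).symm
  have e2 : Real.cos (2 * π * y) = Real.cos (2 * π - 2 * π * y) := (Real.cos_two_pi_sub _).symm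
  have hcos : Real.cos (2 * π - 2 * π * x) ≤ Real.cos (2 * π - 2 * π * y) := by
    apply Real.strictAntiOn_cos.antitoneOn _ _ (by nlinarith [Real.pi_pos])
    · constructor
      · nlinarith [Real.pi_pos, hy.2]
      · nlinarith [Real.pi_pos, hy.1]
    · constructor
      · nlinarith [Real.pi_pos, hx.2]
      · nlinarith [Real.pi_pos, hx.1]
  rw [e1, e2] at *
  nlinarith

lemma w_arc_le {r : ℝ → EuclideanSpace ℝ (Fin d)} (hc : Continuous r)
    {a b : ℝ} (hab : a ≤ b) :
    w (r '' Icc a b) ≤ 2 * eVariationOn r (Icc a b) := by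
  set γ : ℝ → EuclideanSpace ℝ (Fin d) := r ∘ tent a b with hγ
  have hγc : Continuous γ := hc.comp (tent_cont a b)
  have hγp : Periodic γ 1 := fun t => by
    simp only [hγ, comp_apply, tent_periodic a b t]
  have hcov : r '' Icc a b ⊆ γ '' Icc (0:ℝ) 1 := by
    have hIVT : Icc a b ⊆ tent a b '' Icc 0 (1/2 : ℝ) := by
      have := intermediate_value_Icc (by norm_num : (0:ℝ) ≤ 1/2)
        ((tent_cont a b).continuousOn (s := Icc 0 (1/2:ℝ)))
      rw [tent_zero, tent_half] at this
      exact this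
    intro x hx
    rcases hx with ⟨t, ht, rfl⟩
    rcases hIVT ht with ⟨u, hu, hut⟩
    exact ⟨u, ⟨hu.1, le_trans hu.2 (by norm_num)⟩, by simp [hγ, hut]⟩
  refine le_trans (w_le_of_curve hγc hγp hcov) ?_
  have hsplit : eVariationOn γ (Icc (0:ℝ) (1/2)) + eVariationOn γ (Icc (1/2:ℝ) 1)
      = eVariationOn γ (Icc (0:ℝ) 1) := by
    have h := eVariationOn.Icc_add_Icc γ (s := univ)
      (by norm_num : (0:ℝ) ≤ 1/2) (by norm_num : (1/2:ℝ) ≤ 1) (mem_univ _)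
    simpa [Set.univ_inter] using h
  rw [← hsplit]
  have h1 : eVariationOn γ (Icc (0:ℝ) (1/2)) ≤ eVariationOn r (Icc a b) := by
    rw [hγ, eVariationOn.comp_eq_of_monotoneOn r _ (tent_monoOn hab)]
    apply eVariationOn.mono
    intro x hx
    rcases hx with ⟨t, _, rfl⟩
    exact tent_mem hab t
  have h2 : eVariationOn γ (Icc (1/2:ℝ) 1) ≤ eVariationOn r (Icc a b) := by
    rw [hγ, eVariationOn.comp_eq_of_antitoneOn r _ (tent_antiOn hab)]
    apply eVariationOn.mono
    intro x hx
    rcases hx with ⟨t, _, rfl⟩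
    exact tent_mem hab t
  calc eVariationOn γ (Icc (0:ℝ) (1/2)) + eVariationOn γ (Icc (1/2:ℝ) 1)
      ≤ eVariationOn r (Icc a b) + eVariationOn r (Icc a b) := add_le_add h1 h2
    _ = 2 * eVariationOn r (Icc a b) := (two_mul _).symm

end GammaAsym


namespace GammaAsym

variable {d : ℕ}

lemma curve_image_infinite {r : ℝ → EuclideanSpace ℝ (Fin d)} (hr : IsUnitClosedCurve d r) :
    (r '' Icc (0:ℝ) 1).Infinite := by
  obtain ⟨hc, hper, hlip, hvar⟩ := hr
  apply IsPreconnected.infinite_of_nontrivial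
  · exact isPreconnected_Icc.image r hc.continuousOn
  · by_contra hsub
    rw [Set.not_nontrivial_iff] at hsub
    have h0 : eVariationOn r (Icc (0:ℝ) 1) = 0 := eVariationOn.constant_on hsub
    rw [hvar] at h0
    exact one_ne_zero h0

lemma gammaCurve_le {r : ℝ → EuclideanSpace ℝ (Fin d)} (hr : IsUnitClosedCurve d r)
    {k : ℕ} (hk : 1 ≤ k) :
    gammaCurve k (r '' Icc (0:ℝ) 1) ≤ ENNReal.ofReal (2 / k) := by
  classical
  obtain ⟨hc, hper, hlip, hvar⟩ := hr
  have hk' : (0:ℝ) < k := by exact_mod_cast hk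
  set C := r '' Icc (0:ℝ) 1 with hC
  set τ : EuclideanSpace ℝ (Fin d) → ℝ :=
    fun x => sInf {t | t ∈ Icc (0:ℝ) 1 ∧ r t = x} with hτdef
  have hτ : ∀ x ∈ C, τ x ∈ Icc (0:ℝ) 1 ∧ r (τ x) = x := by
    intro x hx
    have hcl : IsClosed {t | t ∈ Icc (0:ℝ) 1 ∧ r t = x} := by
      have : {t | t ∈ Icc (0:ℝ) 1 ∧ r t = x} = Icc (0:ℝ) 1 ∩ r ⁻¹' {x} := by
        ext t; simp [Set.mem_inter_iff, Set.mem_preimage]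
      rw [this]
      exact isClosed_Icc.inter (isClosed_singleton.preimage hc)
    have hne : {t | t ∈ Icc (0:ℝ) 1 ∧ r t = x}.Nonempty := by
      rcases hx with ⟨t, ht, rfl⟩
      exact ⟨t, ht, rfl⟩
    have hbdd : BddBelow {t | t ∈ Icc (0:ℝ) 1 ∧ r t = x} :=
      bddBelow_Icc.mono (fun t ht => ht.1)
    exact hcl.csInf_mem hne hbdd
  have hτlt : ∀ x ∈ C, τ x < 1 := by
    intro x hx
    rcases lt_or_eq_of_le (hτ x hx).1.2 with h | h
    · exact h
    · exfalso
      have hr1 : r 1 = x := by rw [← h]; exact (hτ x hx).2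
      have hr0 : r 0 = x := by
        have := hper 0
        rw [zero_add] at this
        rw [← this]; exact hr1
      have h0mem : (0:ℝ) ∈ {t | t ∈ Icc (0:ℝ) 1 ∧ r t = x} := ⟨⟨le_rfl, zero_le_one⟩, hr0⟩
      have hbdd : BddBelow {t | t ∈ Icc (0:ℝ) 1 ∧ r t = x} :=
        bddBelow_Icc.mono (fun t ht => ht.1)
      have : τ x ≤ 0 := csInf_le hbdd h0mem
      rw [h] at this
      linarith
  set P : Fin k → Set (EuclideanSpace ℝ (Fin d)) :=
    fun j => {x | x ∈ C ∧ τ x ∈ Ico ((j:ℝ)/k) (((j:ℝ)+1)/k)} with hPdef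
  have hPsub : ∀ j, P j ⊆ r '' Icc ((j:ℝ)/k) (((j:ℝ)+1)/k) := by
    intro j x hx
    exact ⟨τ x, ⟨hx.2.1, hx.2.2.le⟩, (hτ x hx.1).2⟩
  have hPC : ∀ j, P j ⊆ C := fun j x hx => hx.1
  have hPw : ∀ j, w (P j) ≤ ENNReal.ofReal (2 / k) := by
    intro j
    refine le_trans (w_mono (hPsub j)) ?_
    refine le_trans (w_arc_le hc (by
      rw [div_le_div_iff_of_pos_right hk']
      linarith)) ?_
    have hvarle : eVariationOn r (Icc ((j:ℝ)/k) (((j:ℝ)+1)/k)) ≤ ENNReal.ofReal (1/k) := by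
      have h := evar_le_of_lipschitz hlip (a := (j:ℝ)/k) (b := ((j:ℝ)+1)/k) (by
        rw [div_le_div_iff_of_pos_right hk']
        linarith)
      have harg : ((j:ℝ)+1)/k - (j:ℝ)/k = 1/k := by field_simp; ring
      rwa [harg] at h
    calc 2 * eVariationOn r (Icc ((j:ℝ)/k) (((j:ℝ)+1)/k)) ≤ 2 * ENNReal.ofReal (1/k) := by
          exact mul_le_mul_right hvarle 2
      _ = ENNReal.ofReal (2/k) := by
          rw [show (2 : ENNReal) = ENNReal.ofReal 2 by simp,
            ← ENNReal.ofReal_mul (by norm_num)]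
          congr 1
          ring
  have hPdisj : Pairwise (onFun Disjoint P) := by
    intro i j hij
    simp only [onFun]
    rw [Set.disjoint_left]
    intro x hxi hxj
    have h1 := hxi.2
    have h2 := hxj.2
    have hne : (i : ℕ) ≠ (j : ℕ) := fun h => hij (Fin.ext h)
    rcases lt_or_gt_of_ne hne with h | h
    · have hcast : ((i:ℝ)+1) ≤ (j:ℝ) := by exact_mod_cast h
      have : ((i:ℝ)+1)/k ≤ (j:ℝ)/k := by gcongr
      have := h1.2
      have := h2.1
      linarith
    · have hcast : ((j:ℝ)+1) ≤ (i:ℝ) := by exact_mod_cast h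
      have : ((j:ℝ)+1)/k ≤ (i:ℝ)/k := by gcongr
      have := h2.2
      have := h1.1
      linarith
  have hPunion : ⋃ j, P j = C := by
    apply Set.Subset.antisymm
    · exact Set.iUnion_subset hPC
    · intro x hx
      have hτx := hτ x hx
      have hτ0 : 0 ≤ τ x := hτx.1.1
      have hτ1 : τ x < 1 := hτlt x hx
      set jn : ℕ := Nat.floor ((k:ℝ) * τ x) with hjn
      have hjnlt : jn < k := by
        have h1 : (k:ℝ) * τ x < k := by nlinarith
        exact (Nat.floor_lt (by positivity)).mpr h1
      refine Set.mem_iUnion.mpr ⟨⟨jn, hjnlt⟩, hx, ?_, ?_⟩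
      · have hfl : ((jn:ℝ)) ≤ (k:ℝ) * τ x := Nat.floor_le (by positivity)
        rw [div_le_iff₀ hk']
        simpa [mul_comm] using hfl
      · have hfl : (k:ℝ) * τ x < (jn:ℝ) + 1 := Nat.lt_floor_add_one _
        rw [lt_div_iff₀ hk']
        simpa [mul_comm] using hfl
  -- now fix empties
  have hCinf : C.Infinite := curve_image_infinite ⟨hc, hper, hlip, hvar⟩
  have hj0 : ∃ j0, (P j0).Infinite := by
    by_contra hfin
    push_neg at hfin
    have : C.Finite := by
      rw [← hPunion]
      exact Set.finite_iUnion hfin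
    exact hCinf this
  obtain ⟨j0, hj0inf⟩ := hj0
  set e := hj0inf.natEmbedding with he
  set g : Fin k → EuclideanSpace ℝ (Fin d) := fun i => (e i.val : EuclideanSpace ℝ (Fin d))
    with hg
  have hg_mem : ∀ i, g i ∈ P j0 := fun i => (e i.val).2
  have hg_inj : Function.Injective g := by
    intro i j hijeq
    have h1 : e i.val = e j.val := Subtype.ext hijeq
    have h2 : i.val = j.val := e.injective h1
    exact Fin.ext h2
  set G : Set (EuclideanSpace ℝ (Fin d)) := g '' {i | P i = ∅} with hGdef
  have hGfin : G.Finite := (Set.toFinite {i | P i = ∅}).image g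
  have hj0ne : P j0 ≠ ∅ := hj0inf.nonempty.ne_empty
  set T : Fin k → Set (EuclideanSpace ℝ (Fin d)) :=
    fun j => if P j = ∅ then {g j} else (if j = j0 then P j0 \ G else P j) with hT
  have hTeq1 : ∀ j, P j = ∅ → T j = {g j} := by
    intro j h
    simp only [hT]
    rw [if_pos h]
  have hTeq2 : T j0 = P j0 \ G := by
    simp only [hT]
    rw [if_neg hj0ne]
    simp
  have hTeq3 : ∀ j, P j ≠ ∅ → j ≠ j0 → T j = P j := by
    intro j h1 h2
    simp only [hT]
    rw [if_neg h1, if_neg h2]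
  have hTsubP : ∀ j, P j ≠ ∅ → T j ⊆ P j := by
    intro j hne'
    by_cases h2 : j = j0
    · subst h2
      rw [hTeq2]
      exact Set.diff_subset
    · rw [hTeq3 j hne' h2]
  have hTne : ∀ j, (T j).Nonempty := by
    intro j
    by_cases h1 : P j = ∅
    · rw [hTeq1 j h1]
      exact Set.singleton_nonempty _
    · by_cases h2 : j = j0
      · subst h2
        rw [hTeq2]
        exact (hj0inf.diff hGfin).nonempty
      · rw [hTeq3 j h1 h2]
        exact Set.nonempty_iff_ne_empty.mpr h1
  have hTdisj : Pairwise (onFun Disjoint T) := by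
    intro i j hij
    simp only [onFun]
    rw [Set.disjoint_left]
    intro x hxi hxj
    by_cases hi : P i = ∅ <;> by_cases hj : P j = ∅
    · rw [hTeq1 i hi] at hxi
      rw [hTeq1 j hj] at hxj
      rw [Set.mem_singleton_iff] at hxi hxj
      exact hij (hg_inj (hxi ▸ hxj ▸ rfl))
    · rw [hTeq1 i hi, Set.mem_singleton_iff] at hxi
      subst hxi
      by_cases h2 : j = j0
      · subst h2
        rw [hTeq2] at hxj
        exact hxj.2 ⟨i, hi, rfl⟩
      · have hx1 : g i ∈ P j := hTsubP j hj hxj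
        have hx2 : g i ∈ P j0 := hg_mem i
        exact Set.disjoint_left.mp (hPdisj h2) hx1 hx2
    · rw [hTeq1 j hj, Set.mem_singleton_iff] at hxj
      subst hxj
      by_cases h2 : i = j0
      · subst h2
        rw [hTeq2] at hxi
        exact hxi.2 ⟨j, hj, rfl⟩
      · have hx1 : g j ∈ P i := hTsubP i hi hxi
        have hx2 : g j ∈ P j0 := hg_mem j
        exact Set.disjoint_left.mp (hPdisj h2) hx1 hx2
    · have hx1 : x ∈ P i := hTsubP i hi hxi
      have hx2 : x ∈ P j := hTsubP j hj hxj
      exact Set.disjoint_left.mp (hPdisj hij) hx1 hx2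
  have hTunion : ⋃ j, T j = C := by
    apply Set.Subset.antisymm
    · apply Set.iUnion_subset
      intro j
      by_cases h1 : P j = ∅
      · rw [hTeq1 j h1]
        intro x hx
        rw [Set.mem_singleton_iff] at hx
        subst hx
        exact hPC j0 (hg_mem j)
      · exact (hTsubP j h1).trans (hPC j)
    · intro x hx
      rw [← hPunion] at hx
      obtain ⟨j, hj⟩ := Set.mem_iUnion.mp hx
      have hjne : P j ≠ ∅ := Set.nonempty_iff_ne_empty.mp ⟨x, hj⟩
      by_cases h2 : j = j0
      · subst h2
        by_cases h3 : x ∈ G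
        · obtain ⟨i, hi, rfl⟩ := h3
          refine Set.mem_iUnion.mpr ⟨i, ?_⟩
          rw [hTeq1 i hi]
          exact rfl
        · refine Set.mem_iUnion.mpr ⟨j, ?_⟩
          rw [hTeq2]
          exact ⟨hj, h3⟩
      · refine Set.mem_iUnion.mpr ⟨j, ?_⟩
        rw [hTeq3 j hjne h2]
        exact hj
  have hTw : ∀ j, w (T j) ≤ ENNReal.ofReal (2 / k) := by
    intro j
    by_cases h1 : P j = ∅
    · have : T j = {g j} := by rw [hT]; simp [h1]
      rw [this, w_singleton]
      exact zero_le
    · exact le_trans (w_mono (hTsubP j h1)) (hPw j)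
  have hpart : IsPartitionInto k T C := ⟨hTne, hTdisj, hTunion⟩
  calc gammaCurve k C ≤ ⨆ i, w (T i) := iInf_le (fun S : {S : Fin k → Set (EuclideanSpace ℝ (Fin d)) // IsPartitionInto k S C} => ⨆ i, w (S.1 i)) ⟨T, hpart⟩
    _ ≤ ENNReal.ofReal (2 / k) := iSup_le hTw

end GammaAsym


namespace GammaAsym

lemma compact_measure_le {A : Set ℝ} (hK : IsCompact A) (hne : A.Nonempty) :
    volume A ≤ ENNReal.ofReal (sSup A - sInf A) := by
  have hsub : A ⊆ Icc (sInf A) (sSup A) :=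
    fun x hx => ⟨csInf_le hK.bddBelow hx, le_csSup hK.bddAbove hx⟩
  calc volume A ≤ volume (Icc (sInf A) (sSup A)) := measure_mono hsub
    _ = ENNReal.ofReal (sSup A - sInf A) := Real.volume_Icc

lemma exists_pair {A : Set ℝ} (hA : A ⊆ Icc (0:ℝ) 1) (hcl : IsClosed A) {m : ℝ}
    (hm0 : 0 < m) (hm3 : m ≤ 1/3) (hvol : ENNReal.ofReal m ≤ volume A) :
    ∃ s ∈ A, ∃ t ∈ A, m ≤ |s - t| ∧ |s - t| ≤ 1 - m := by
  have hK : IsCompact A := IsCompact.of_isClosed_subset isCompact_Icc hcl hA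
  have hne : A.Nonempty := by
    by_contra h
    rw [Set.not_nonempty_iff_eq_empty] at h
    rw [h, measure_empty, nonpos_iff_eq_zero] at hvol
    rw [ENNReal.ofReal_eq_zero] at hvol
    linarith
  set a := sInf A with hadef
  set b := sSup A with hbdef
  have ha : a ∈ A := hK.sInf_mem hne
  have hb : b ∈ A := hK.sSup_mem hne
  have ha0 : 0 ≤ a := (hA ha).1
  have hb1 : b ≤ 1 := (hA hb).2
  have haleb : a ≤ b := csInf_le_csSup hne hK.bddBelow hK.bddAbove
  have hab : m ≤ b - a := by
    have h1 := le_trans hvol (compact_measure_le hK hne)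
    rwa [ENNReal.ofReal_le_ofReal_iff (by linarith)] at h1
  by_cases hcase : b - a ≤ 1 - m
  · refine ⟨b, hb, a, ha, ?_, ?_⟩
    · rw [abs_of_nonneg (by linarith)]; exact hab
    · rw [abs_of_nonneg (by linarith)]; exact hcase
  · push_neg at hcase
    by_cases hmid : (A ∩ Icc (b-1+m) (a+1-m)).Nonempty
    · obtain ⟨t, htA, ht1, ht2⟩ := hmid
      by_cases hbm : t ≤ b - m
      · refine ⟨b, hb, t, htA, ?_, ?_⟩
        · rw [abs_of_nonneg (by linarith)]; linarith
        · rw [abs_of_nonneg (by linarith)]; linarith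
      · push_neg at hbm
        refine ⟨t, htA, a, ha, ?_, ?_⟩
        · rw [abs_of_nonneg (by linarith)]; linarith
        · rw [abs_of_nonneg (by linarith)]; linarith
    · rw [Set.not_nonempty_iff_eq_empty] at hmid
      set A1 := A ∩ Iic (b-1+m) with hA1def
      set A2 := A ∩ Ici (a+1-m) with hA2def
      have hha : b - 1 + m ≤ a + 1 - m := by linarith
      have hsplit : A ⊆ A1 ∪ A2 := by
        intro x hx
        by_cases h1 : x ≤ b - 1 + m
        · exact Or.inl ⟨hx, h1⟩
        · push_neg at h1
          by_cases h2 : a + 1 - m ≤ x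
          · exact Or.inr ⟨hx, h2⟩
          · push_neg at h2
            exfalso
            have : x ∈ A ∩ Icc (b-1+m) (a+1-m) := ⟨hx, le_of_lt h1, le_of_lt h2⟩
            rw [hmid] at this
            exact this
      have hA1cl : IsClosed A1 := hcl.inter isClosed_Iic
      have hA2cl : IsClosed A2 := hcl.inter isClosed_Ici
      set A1' := (fun x : ℝ => x + (-1)) ⁻¹' A1 with hA1'def
      have hA1'cl : IsClosed A1' := hA1cl.preimage (continuous_add_right (-1))
      have hA1'vol : volume A1' = volume A1 := measure_preimage_add_right volume (-1) A1
      set Cc := A2 ∪ A1' with hCcdef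
      have hCcl : IsClosed Cc := hA2cl.union hA1'cl
      have hCsub : Cc ⊆ Icc (a+1-m) (b+m) := by
        rintro x (hx | hx)
        · exact ⟨hx.2, le_trans (le_csSup hK.bddAbove hx.1) (by linarith)⟩
        · have h1 : x + (-1) ∈ A1 := hx
          have h2 : a ≤ x + (-1) := csInf_le hK.bddBelow h1.1
          have h3 : x + (-1) ≤ b - 1 + m := h1.2
          constructor <;> linarith
      have hCK : IsCompact Cc := IsCompact.of_isClosed_subset isCompact_Icc hCcl hCsub
      have hCvol : ENNReal.ofReal m ≤ volume Cc := by
        have hstep1 : volume A ≤ volume A1 + volume A2 :=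
          le_trans (measure_mono hsplit) (measure_union_le _ _)
        have hA2diff : volume (A2 \ {1}) = volume A2 :=
          measure_diff_null (by simp [Real.volume_singleton])
        have hdisj : Disjoint (A2 \ {1}) A1' := by
          rw [Set.disjoint_left]
          rintro x ⟨hx2, hxne⟩ hx1
          have h1 : x ≤ b := le_csSup hK.bddAbove hx2.1
          have h2 : a ≤ x + (-1) := csInf_le hK.bddBelow hx1.1
          have : x = 1 := by linarith
          exact hxne this
        have hunion : volume ((A2 \ {1}) ∪ A1') = volume (A2 \ {1}) + volume A1' :=
          measure_union hdisj hA1'cl.measurableSet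
        have hsub2 : (A2 \ {1}) ∪ A1' ⊆ Cc := by
          rintro x (hx | hx)
          · exact Or.inl hx.1
          · exact Or.inr hx
        calc ENNReal.ofReal m ≤ volume A := hvol
          _ ≤ volume A1 + volume A2 := hstep1
          _ = volume (A2 \ {1}) + volume A1' := by
              rw [hA2diff, hA1'vol, add_comm]
          _ = volume ((A2 \ {1}) ∪ A1') := hunion.symm
          _ ≤ volume Cc := measure_mono hsub2
      have hCne : Cc.Nonempty := by
        by_contra h
        rw [Set.not_nonempty_iff_eq_empty] at h
        rw [h, measure_empty, nonpos_iff_eq_zero, ENNReal.ofReal_eq_zero] at hCvol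
        linarith
      set u := sInf Cc with hudef
      set v := sSup Cc with hvdef
      have hu : u ∈ Cc := hCK.sInf_mem hCne
      have hv : v ∈ Cc := hCK.sSup_mem hCne
      have huv : m ≤ v - u := by
        have h1 := le_trans hCvol (compact_measure_le hCK hCne)
        have haleb2 : u ≤ v := csInf_le_csSup hCne hCK.bddBelow hCK.bddAbove
        rwa [ENNReal.ofReal_le_ofReal_iff (by linarith)] at h1
      have hvu : v - u ≤ 1 - m := by
        have h1 := (hCsub hu).1
        have h2 := (hCsub hv).2
        linarith
      rcases hu with hu2 | hu1 <;> rcases hv with hv2 | hv1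
      · refine ⟨v, hv2.1, u, hu2.1, ?_, ?_⟩
        · rw [abs_of_nonneg (by linarith)]; exact huv
        · rw [abs_of_nonneg (by linarith)]; exact hvu
      · -- u ∈ A2, v ∈ A1'
        refine ⟨u, hu2.1, v + (-1), hv1.1, ?_, ?_⟩
        · rw [abs_of_nonneg (by linarith)]; linarith
        · rw [abs_of_nonneg (by linarith)]; linarith
      · -- u ∈ A1', v ∈ A2 : impossible
        exfalso
        have h1 : a ≤ u + (-1) := csInf_le hK.bddBelow hu1.1
        have h2 : v ≤ b := le_csSup hK.bddAbove hv2.1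
        have h3 : u ≤ v := csInf_le_csSup hCne hCK.bddBelow hCK.bddAbove
        linarith
      · refine ⟨v + (-1), hv1.1, u + (-1), hu1.1, ?_, ?_⟩
        · rw [abs_of_nonneg (by linarith)]; linarith
        · rw [abs_of_nonneg (by linarith)]; linarith

end GammaAsym


namespace GammaAsym

lemma sin_ge {c x : ℝ} (hc0 : 0 < c) (hc : c ≤ 1/3) (hx1 : c ≤ x) (hx2 : x ≤ 1 - c) :
    Real.sin (π * c) ≤ Real.sin (π * x) := by
  have hπ := Real.pi_pos
  have hmono := Real.strictMonoOn_sin.monotoneOn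
  by_cases hhalf : x ≤ 1/2
  · apply hmono _ _ (by nlinarith)
    · constructor <;> nlinarith
    · constructor <;> nlinarith
  · push_neg at hhalf
    have hsub : Real.sin (π * x) = Real.sin (π * (1 - x)) := by
      rw [show π * (1 - x) = π - π * x by ring, Real.sin_pi_sub]
    rw [hsub]
    apply hmono _ _ (by nlinarith)
    · constructor <;> nlinarith
    · constructor <;> nlinarith

lemma partition_bound {d k : ℕ} (hd : 2 ≤ d) (hk : 3 ≤ k)
    {S : Fin k → Set (EuclideanSpace ℝ (Fin d))}
    (hpart : IsPartitionInto k S (cr d '' Icc (0:ℝ) 1)) :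
    ENNReal.ofReal (4 * R * Real.sin (π / k)) ≤ ⨆ i, w (S i) := by
  have hk' : (0:ℝ) < k := by positivity
  have hkk : (0:ℝ) < (k:ℝ) := by exact_mod_cast (by omega : 0 < k)
  set T : Fin k → Set ℝ := fun i => Ico (0:ℝ) 1 ∩ cr d ⁻¹' (S i) with hT
  have hTcover : Ico (0:ℝ) 1 ⊆ ⋃ i, T i := by
    intro t ht
    have hmem : cr d t ∈ cr d '' Icc (0:ℝ) 1 := ⟨t, ⟨ht.1, ht.2.le⟩, rfl⟩
    rw [← hpart.2.2] at hmem
    obtain ⟨i, hi⟩ := Set.mem_iUnion.mp hmem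
    exact Set.mem_iUnion.mpr ⟨i, ht, hi⟩
  have hsum : (1 : ENNReal) ≤ ∑ i : Fin k, volume (T i) := by
    calc (1 : ENNReal) = volume (Ico (0:ℝ) 1) := by
          rw [Real.volume_Ico]; norm_num
      _ ≤ volume (⋃ i, T i) := measure_mono hTcover
      _ ≤ ∑' i, volume (T i) := measure_iUnion_le _
      _ = ∑ i : Fin k, volume (T i) := tsum_fintype _
  have hnefin : (Finset.univ : Finset (Fin k)).Nonempty := by
    refine ⟨⟨0, by omega⟩, Finset.mem_univ _⟩
  obtain ⟨i0, _, hmax⟩ := Finset.exists_max_image Finset.univ (fun i => volume (T i)) hnefin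
  have hsum2 : (1 : ENNReal) ≤ (k : ENNReal) * volume (T i0) := by
    calc (1 : ENNReal) ≤ ∑ i : Fin k, volume (T i) := hsum
      _ ≤ Finset.univ.card • volume (T i0) :=
          Finset.sum_le_card_nsmul _ _ _ (fun i _ => hmax i (Finset.mem_univ i))
      _ = (k : ENNReal) * volume (T i0) := by
          rw [Finset.card_univ, Fintype.card_fin, nsmul_eq_mul]
  have hvolT : ENNReal.ofReal (1/(k:ℝ)) ≤ volume (T i0) := by
    have hofr : ENNReal.ofReal (1/(k:ℝ)) = 1 / (k : ENNReal) := by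
      rw [ENNReal.ofReal_div_of_pos hkk, ENNReal.ofReal_one, ENNReal.ofReal_natCast]
    rw [hofr, ENNReal.div_le_iff_le_mul (Or.inl (by exact_mod_cast (by omega : k ≠ 0)))
      (Or.inl (ENNReal.natCast_ne_top k))]
    rwa [mul_comm] at hsum2
  set B := closure (T i0) with hB
  have hBsub : B ⊆ Icc (0:ℝ) 1 :=
    closure_minimal (fun x hx => ⟨hx.1.1, hx.1.2.le⟩) isClosed_Icc
  have hBvol : ENNReal.ofReal (1/(k:ℝ)) ≤ volume B :=
    le_trans hvolT (measure_mono subset_closure)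
  have hklarge : (1:ℝ)/(k:ℝ) ≤ 1/3 := by
    rw [div_le_div_iff_of_pos_left (by norm_num) hkk (by norm_num)]
    exact_mod_cast hk
  obtain ⟨s, hs, t, ht, hst1, hst2⟩ :=
    exists_pair hBsub isClosed_closure (by positivity) hklarge hBvol
  -- images are in closure (S i0)
  have himg : ∀ x ∈ B, cr d x ∈ closure (S i0) := by
    intro x hx
    have h1 : cr d x ∈ cr d '' closure (T i0) := ⟨x, hx, rfl⟩
    have h2 : cr d '' closure (T i0) ⊆ closure (cr d '' T i0) :=
      image_closure_subset_closure_image (cr_continuous hd)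
    have h3 : cr d '' T i0 ⊆ S i0 := by
      rintro y ⟨z, hz, rfl⟩
      exact hz.2
    exact closure_mono h3 (h2 h1)
  have hchord : ENNReal.ofReal (4 * R * Real.sin (π / k)) ≤ 2 * edist (cr d s) (cr d t) := by
    rw [cr_edist hd]
    have habs : |Real.sin (π * (s - t))| = Real.sin (π * |s - t|) := by
      rcases abs_cases (s - t) with ⟨h1, _⟩ | ⟨h1, h2⟩
      · rw [h1]
        apply abs_of_nonneg
        apply Real.sin_nonneg_of_nonneg_of_le_pi
        · have : (0:ℝ) ≤ |s - t| := abs_nonneg _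
          positivity
        · have h3 : |s - t| ≤ 1 := by
            have := hBsub hs; have := hBsub ht
            rw [abs_le]; constructor <;> [linarith [(hBsub hs).1, (hBsub ht).2];
              linarith [(hBsub hs).2, (hBsub ht).1]]
          nlinarith [Real.pi_pos]
      · rw [h1, show π * -(s-t) = -(π * (s-t)) by ring, Real.sin_neg]
        have hnn : 0 ≤ Real.sin (-(π * (s-t))) := by
          apply Real.sin_nonneg_of_nonneg_of_le_pi
          · nlinarith [Real.pi_pos]
          · have h3 : -(s - t) ≤ 1 := by
              linarith [(hBsub hs).1, (hBsub ht).2]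
            nlinarith [Real.pi_pos]
        rw [Real.sin_neg] at hnn
        exact abs_of_nonpos (by linarith)
    have hsin : Real.sin (π / k) ≤ Real.sin (π * |s - t|) := by
      rw [show π / (k:ℝ) = π * (1/(k:ℝ)) by ring]
      exact sin_ge (by positivity) hklarge hst1 hst2
    rw [show (2 : ENNReal) = ENNReal.ofReal 2 by simp, ← ENNReal.ofReal_mul (by norm_num)]
    apply ENNReal.ofReal_le_ofReal
    rw [habs]
    nlinarith [R_pos]
  refine le_trans hchord (le_trans ?_ (le_iSup (fun i => w (S i)) i0))
  exact two_edist_le_w (himg s hs) (himg t ht)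

end GammaAsym


namespace GammaAsym

lemma gammaSup_le {d k : ℕ} (hk : 1 ≤ k) : gammaSup d k ≤ ENNReal.ofReal (2 / k) := by
  apply iSup_le
  rintro ⟨r, hr⟩
  exact gammaCurve_le hr hk

lemma gammaSup_ge {d k : ℕ} (hd : 2 ≤ d) (hk : 3 ≤ k) :
    ENNReal.ofReal (4 * R * Real.sin (π / k)) ≤ gammaSup d k := by
  refine le_trans ?_ (le_iSup (fun r : {r : ℝ → EuclideanSpace ℝ (Fin d) //
    IsUnitClosedCurve d r} => gammaCurve k (r.1 '' Icc (0:ℝ) 1))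
    ⟨cr d, cr_isUnitClosedCurve hd⟩)
  apply le_iInf
  rintro ⟨S, hS⟩
  exact partition_bound hd hk hS

end GammaAsym

theorem gamma_asymptotic (d : ℕ) (hd : 2 ≤ d) :
    Filter.Tendsto (fun k : ℕ => (k : ENNReal) * gammaSup d k)
      Filter.atTop (nhds 2) := by
  open GammaAsym in
  have hupper : ∀ k : ℕ, 1 ≤ k → (k : ENNReal) * gammaSup d k ≤ 2 := by
    intro k hk
    have hk' : (0:ℝ) < k := by exact_mod_cast hk
    calc (k : ENNReal) * gammaSup d k
        ≤ (k : ENNReal) * ENNReal.ofReal (2 / k) := by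
          exact mul_le_mul_right (GammaAsym.gammaSup_le hk) _
      _ = ENNReal.ofReal ((k:ℝ) * (2 / k)) := by
          rw [ENNReal.ofReal_mul (by positivity), ENNReal.ofReal_natCast]
      _ = 2 := by
          rw [show (k:ℝ) * (2/k) = 2 by field_simp]
          simp
  have hlower : ∀ k : ℕ, 3 ≤ k →
      ENNReal.ofReal ((k:ℝ) * (4 * GammaAsym.R * Real.sin (π / k)))
        ≤ (k : ENNReal) * gammaSup d k := by
    intro k hk
    rw [ENNReal.ofReal_mul (by positivity), ENNReal.ofReal_natCast]
    exact mul_le_mul_right (GammaAsym.gammaSup_ge hd hk) _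
  have hglim : Filter.Tendsto
      (fun k : ℕ => ENNReal.ofReal ((k:ℝ) * (4 * GammaAsym.R * Real.sin (π / k))))
      Filter.atTop (nhds 2) := by
    have hreal : Filter.Tendsto
        (fun k : ℕ => (k:ℝ) * (4 * GammaAsym.R * Real.sin (π / k)))
        Filter.atTop (nhds 2) := by
      have h1 := GammaAsym.nsin_tendsto.const_mul (4 * GammaAsym.R)
      have h2 : 4 * GammaAsym.R * π = 2 := by
        rw [GammaAsym.R]
        field_simp
        ring
      rw [h2] at h1
      refine h1.congr (fun k => by ring)
    have := (ENNReal.continuous_ofReal.tendsto 2).comp hreal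
    rw [ENNReal.ofReal_ofNat] at this
    exact this
  apply tendsto_of_tendsto_of_tendsto_of_le_of_le' hglim tendsto_const_nhds
  · filter_upwards [Filter.eventually_ge_atTop 3] with k hk
    exact hlower k hk
  · filter_upwards [Filter.eventually_ge_atTop 1] with k hk
    exact hupper k hk


end
end
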